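/- Assume there is a constant c₃ > 0 such that ℙ_d(τ_{O,O} < +∞) ≤ 1/d + c₃/d² for every d ≥ 4. Then for every d ≥ 4 and all x, y ∈ ℤ₊^d with x ≠ y and ‖x‖ = ‖y‖, ℙ_d(τ_{x,y} < +∞) ≤ c₃/(d(d − 1)). -/

import Mathlib

open MeasureTheory ProbabilityTheory Filter Set

noncomputable section

/-- The oriented random walk on `ℤ₊^d` started at `x` whose `m`-th increment is the
standard basis vector `e_{inc m}`: its position after `k` steps. -/
def walkRW {Ω : Type} {d : ℕ} (x : Fin d → ℕ) (inc : ℕ → Ω → Fin d) (k : ℕ) (ω : Ω) :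
    Fin d → ℕ :=
  fun i => x i + ∑ m ∈ Finset.range k, (if inc m ω = i then 1 else 0)

/-- The `ℓ¹` norm of a vertex of `ℤ₊^d`. -/
def nrm {d : ℕ} (x : Fin d → ℕ) : ℕ := ∑ i, x i

/-- Two independent oriented random walks on `ℤ₊^d`: the two increment sequences `inc1`
and `inc2` are i.i.d. uniform on the standard basis directions `Fin d`, and all the
increments are jointly independent; `ℙ_d` is the probability measure `P`. -/
structure RWModel {Ω : Type} [MeasurableSpace Ω] (P : Measure Ω) (d : ℕ) where
  hprob : IsProbabilityMeasure P
  inc1 : ℕ → Ω → Fin d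
  inc2 : ℕ → Ω → Fin d
  h1meas : ∀ n, Measurable (inc1 n)
  h2meas : ∀ n, Measurable (inc2 n)
  h1law : ∀ (n : ℕ) (j : Fin d), P {ω | inc1 n ω = j} = (d : ENNReal)⁻¹
  h2law : ∀ (n : ℕ) (j : Fin d), P {ω | inc2 n ω = j} = (d : ENNReal)⁻¹
  hIndep : iIndepFun (β := fun _ : ℕ ⊕ ℕ => Fin d)
    (Sum.elim inc1 inc2) P

/-- The event `τ_{x,y} < ∞` (for `‖x‖ ≤ ‖y‖`): the walk started at `x` eventually hits the
trajectory of the walk started at `y`, i.e. there is `k ≥ ‖y‖ − ‖x‖` with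
`ϑ_k^x = ν_{k−‖y‖+‖x‖}^y`. -/
def meetEvent {Ω : Type} {d : ℕ} (inc1 inc2 : ℕ → Ω → Fin d) (x y : Fin d → ℕ) :
    Set Ω :=
  {ω | ∃ k : ℕ, nrm y - nrm x ≤ k ∧
    walkRW x inc1 k ω = walkRW y inc2 (k - (nrm y - nrm x)) ω}

/-- The event `τ_{O,O} < ∞`: the two walks started at the origin collide at some time
`n ≥ 1`. -/
def meetOrigin {Ω : Type} {d : ℕ} (inc1 inc2 : ℕ → Ω → Fin d) : Set Ω :=
  {ω | ∃ n : ℕ, 1 ≤ n ∧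
    walkRW (fun _ => 0) inc1 n ω = walkRW (fun _ => 0) inc2 n ω}

/-!
Everything is transported to the path space `ℕ ⊕ ℕ → Fin d` of increment sequences with the
product of uniform laws, where the increments after a time `t` are independent of those before
and again have the product law. Let `q` be the probability that the walks started at `e_i` and
`e_j` (`i ≠ j`) meet; by symmetry it does not depend on the pair. Splitting on the first steps,
`ℙ(τ_{O,O} < ∞) = 1/d + (1 - 1/d) q`, so the hypothesis forces `q ≤ c₃/(d(d - 1))`. Two walks
started at distinct points of the same level that meet must first reach positions `u, v` with
`u + e_i = v + e_j` for some `i ≠ j`; at the first such time the future is a fresh pair of walks,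
and by translation invariance they meet with probability `q`. Hence `ℙ(τ_{x,y} < ∞) ≤ q`.
-/

namespace OrientedWalk

open Measure Function
open scoped ENNReal

lemma measure_iUnion_inter_le {Ω ι : Type*} [MeasurableSpace Ω] [Countable ι] {μ : Measure Ω}
    [IsProbabilityMeasure μ] {E F : ι → Set Ω} {q : ℝ≥0∞} (hE : ∀ i, MeasurableSet (E i))
    (hdisj : Pairwise (Disjoint on E)) (h : ∀ i, μ (E i ∩ F i) ≤ μ (E i) * q) :
    μ (⋃ i, E i ∩ F i) ≤ q :=
  calc μ (⋃ i, E i ∩ F i) ≤ ∑' i, μ (E i ∩ F i) := measure_iUnion_le _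
    _ ≤ ∑' i, μ (E i) * q := ENNReal.tsum_le_tsum h
    _ = μ (⋃ i, E i) * q := by rw [ENNReal.tsum_mul_right, measure_iUnion hdisj hE]
    _ ≤ q := mul_le_of_le_one_left' prob_le_one

section PathSpace

variable {α : Type*} [MeasurableSpace α]

def time : ℕ ⊕ ℕ → ℕ := Sum.elim id id

def shift (t : ℕ) (l : ℕ ⊕ ℕ → α) : ℕ ⊕ ℕ → α := fun j => l (Sum.map (t + ·) (t + ·) j)

abbrev past (t : ℕ) : MeasurableSpace (ℕ ⊕ ℕ → α) :=
  ⨆ j ∈ {j | time j < t}, MeasurableSpace.comap (fun l => l j) ‹_›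

lemma measurable_shift (t : ℕ) : Measurable (shift (α := α) t) :=
  measurable_pi_lambda _ fun _ => measurable_pi_apply _

lemma past_le (t : ℕ) : past (α := α) t ≤ MeasurableSpace.pi :=
  iSup₂_le fun j _ => (measurable_pi_apply j).comap_le

lemma past_mono : Monotone (past (α := α)) := fun _ _ hst =>
  biSup_mono fun _ hj => lt_of_lt_of_le hj hst

lemma measurable_apply_past {t : ℕ} {j : ℕ ⊕ ℕ} (hj : time j < t) :
    Measurable[past t] fun l : ℕ ⊕ ℕ → α => l j :=
  Measurable.of_comap_le <|
    le_biSup (fun j => MeasurableSpace.comap (fun l : ℕ ⊕ ℕ → α => l j) ‹_›) hj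

lemma comap_shift_le_future (t : ℕ) :
    MeasurableSpace.comap (shift (α := α) t) MeasurableSpace.pi ≤
      ⨆ j ∈ {j | time j < t}ᶜ, MeasurableSpace.comap (fun l : ℕ ⊕ ℕ → α => l j) ‹_› := by
  rw [MeasurableSpace.pi, MeasurableSpace.comap_iSup]
  refine iSup_le fun j => ?_
  rw [MeasurableSpace.comap_comp]
  refine le_biSup (fun j => MeasurableSpace.comap (fun l : ℕ ⊕ ℕ → α => l j) ‹_›)
    (show Sum.map (t + ·) (t + ·) j ∈ {j | time j < t}ᶜ from ?_)
  cases j <;> simp [time]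

variable (ν : Measure α) [IsProbabilityMeasure ν]

lemma iIndepFun_apply_infinitePi :
    iIndepFun (fun j (l : ℕ ⊕ ℕ → α) => l j) (infinitePi fun _ => ν) := by
  rw [iIndepFun_iff_map_fun_eq_infinitePi_map fun j => measurable_pi_apply j]
  simp [infinitePi_map_eval]

lemma infinitePi_map_shift (t : ℕ) :
    (infinitePi fun _ => ν).map (shift t) = infinitePi fun _ : ℕ ⊕ ℕ => ν := by
  have hinj : Injective (Sum.map (t + ·) (t + ·)) :=
    Sum.map_injective.2 ⟨add_right_injective t, add_right_injective t⟩
  have := ((iIndepFun_apply_infinitePi ν).precomp hinj).map_fun_eq_infinitePi_map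
    fun j => measurable_pi_apply _
  simp only [infinitePi_map_eval] at this
  exact this

lemma indep_past_comap_shift (t : ℕ) :
    Indep (past t) (MeasurableSpace.comap (shift t) MeasurableSpace.pi)
      (infinitePi fun _ : ℕ ⊕ ℕ => ν) :=
  indep_of_indep_of_le_right
    (indep_biSup_compl (fun j => (measurable_pi_apply j).comap_le)
      (iIndepFun_apply_infinitePi ν).iIndep _) (comap_shift_le_future t)

lemma infinitePi_inter_shift_preimage {t : ℕ} {B : Set (ℕ ⊕ ℕ → α)} {M : Set (ℕ ⊕ ℕ → α)}
    (hB : MeasurableSet[past t] B) (hM : MeasurableSet M) :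
    infinitePi (fun _ => ν) (B ∩ shift t ⁻¹' M) =
      infinitePi (fun _ => ν) B * infinitePi (fun _ => ν) M := by
  rw [(indep_past_comap_shift ν t).indepSet_of_measurableSet hB ⟨M, hM, rfl⟩
    |>.measure_inter_eq_mul, ← map_apply (measurable_shift t) hM, infinitePi_map_shift]

end PathSpace

variable {d : ℕ}

section Walk

variable {Ω : Type} (x : Fin d → ℕ) (inc : ℕ → Ω → Fin d) (ω : Ω)

lemma walkRW_zero : walkRW x inc 0 ω = x := by
  funext i
  simp [walkRW]

lemma walkRW_succ (k : ℕ) :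
    walkRW x inc (k + 1) ω = walkRW x inc k ω + Pi.single (inc k ω) 1 := by
  funext i
  simp only [walkRW, Finset.sum_range_succ, Pi.add_apply, Pi.single_apply, eq_comm, add_assoc]

lemma walkRW_add (t k : ℕ) :
    walkRW x inc (t + k) ω = walkRW (walkRW x inc t ω) (fun m => inc (t + m)) k ω := by
  funext i
  simp only [walkRW, Finset.sum_range_add, add_assoc]

lemma walkRW_eq_add_walkRW_zero (k : ℕ) : walkRW x inc k ω = x + walkRW 0 inc k ω := by
  funext i
  simp [walkRW]

lemma walkRW_perm_comp (π : Equiv.Perm (Fin d)) (k : ℕ) :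
    walkRW x (fun m ω => π (inc m ω)) k ω ∘ π = walkRW (x ∘ π) inc k ω := by
  funext i
  simp [walkRW]

lemma measurable_walkRW {mΩ : MeasurableSpace Ω} {inc : ℕ → Ω → Fin d} {t : ℕ}
    (hinc : ∀ m < t, Measurable (inc m)) : Measurable (walkRW x inc t) :=
  measurable_pi_lambda _ fun i => measurable_const.add <| Finset.measurable_sum _ fun m hm =>
    (measurable_of_countable (fun a : Fin d => if a = i then 1 else 0)).comp
      (hinc m (Finset.mem_range.1 hm))

end Walk

def Adjacent (u v : Fin d → ℕ) : Prop := ∃ i j, i ≠ j ∧ u + Pi.single i 1 = v + Pi.single j 1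

lemma eq_or_adjacent_of_add_single_eq {u v : Fin d → ℕ} {i j : Fin d}
    (h : u + Pi.single i 1 = v + Pi.single j 1) : u = v ∨ Adjacent u v := by
  by_cases hij : i = j
  · subst hij
    exact .inl (add_right_cancel h)
  · exact .inr ⟨i, j, hij, h⟩

lemma exists_adjacent_of_walkRW_eq {Ω : Type} {x y : Fin d → ℕ} (hxy : x ≠ y)
    {inc inc' : ℕ → Ω → Fin d} {ω : Ω} {k : ℕ} (hk : walkRW x inc k ω = walkRW y inc' k ω) :
    ∃ s < k, Adjacent (walkRW x inc s ω) (walkRW y inc' s ω) := by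
  induction k with
  | zero => exact absurd (by simpa [walkRW_zero] using hk) hxy
  | succ k ih =>
    rw [walkRW_succ, walkRW_succ] at hk
    rcases eq_or_adjacent_of_add_single_eq hk with hk | hadj
    · obtain ⟨s, hs, hadj⟩ := ih hk
      exact ⟨s, hs.trans k.lt_succ_self, hadj⟩
    · exact ⟨k, k.lt_succ_self, hadj⟩

section PathWalk

def inc₁ (m : ℕ) (l : ℕ ⊕ ℕ → Fin d) : Fin d := l (.inl m)

def inc₂ (m : ℕ) (l : ℕ ⊕ ℕ → Fin d) : Fin d := l (.inr m)

def syncMeet (x y : Fin d → ℕ) : Set (ℕ ⊕ ℕ → Fin d) :=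
  {l | ∃ k, walkRW x inc₁ k l = walkRW y inc₂ k l}

variable {x y : Fin d → ℕ}

lemma meetEvent_eq_syncMeet (h : nrm x = nrm y) : meetEvent inc₁ inc₂ x y = syncMeet x y := by
  simp [meetEvent, syncMeet, h]

lemma syncMeet_self (x : Fin d → ℕ) : syncMeet x x = univ :=
  eq_univ_of_forall fun _ => ⟨0, by simp [walkRW_zero]⟩

lemma syncMeet_eq_of_add_eq {x' y' : Fin d → ℕ} (h : x + y' = x' + y) :
    syncMeet x y = syncMeet x' y' := by
  ext l
  simp only [syncMeet, mem_ofPred_eq, walkRW_eq_add_walkRW_zero x, walkRW_eq_add_walkRW_zero y,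
    walkRW_eq_add_walkRW_zero x', walkRW_eq_add_walkRW_zero y', funext_iff, Pi.add_apply]
  refine exists_congr fun k => forall_congr' fun i => ?_
  have hi := congrFun h i
  simp only [Pi.add_apply] at hi
  omega

lemma syncMeet_of_adjacent {u v : Fin d → ℕ} {i j : Fin d}
    (h : u + Pi.single i 1 = v + Pi.single j 1) :
    syncMeet u v = syncMeet (Pi.single j 1) (Pi.single i 1) :=
  syncMeet_eq_of_add_eq (by rw [h, add_comm])

lemma shift_mem_syncMeet_iff {t : ℕ} {l : ℕ ⊕ ℕ → Fin d} :
    shift t l ∈ syncMeet (walkRW x inc₁ t l) (walkRW y inc₂ t l) ↔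
      ∃ k, t ≤ k ∧ walkRW x inc₁ k l = walkRW y inc₂ k l := by
  constructor
  · rintro ⟨k, hk⟩
    exact ⟨t + k, le_add_right le_rfl, by rwa [walkRW_add, walkRW_add]⟩
  · rintro ⟨k, htk, hk⟩
    refine ⟨k - t, ?_⟩
    rw [← Nat.add_sub_cancel' htk, walkRW_add, walkRW_add] at hk
    exact hk

lemma measurable_walkRW_inc₁ (x : Fin d → ℕ) (t : ℕ) : Measurable[past t] (walkRW x inc₁ t) :=
  measurable_walkRW (mΩ := past t) x fun m hm => measurable_apply_past (by simpa [time] using hm)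

lemma measurable_walkRW_inc₂ (x : Fin d → ℕ) (t : ℕ) : Measurable[past t] (walkRW x inc₂ t) :=
  measurable_walkRW (mΩ := past t) x fun m hm => measurable_apply_past (by simpa [time] using hm)

lemma measurableSet_syncMeet (x y : Fin d → ℕ) : MeasurableSet (syncMeet x y) := by
  rw [syncMeet, ofPred_exists]
  exact MeasurableSet.iUnion fun k => measurableSet_eq_fun
    ((measurable_walkRW_inc₁ x k).mono (past_le k) le_rfl)
    ((measurable_walkRW_inc₂ y k).mono (past_le k) le_rfl)

lemma preimage_perm_syncMeet (π : Equiv.Perm (Fin d)) (x y : Fin d → ℕ) :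
    (fun l j => π (l j)) ⁻¹' syncMeet x y = syncMeet (x ∘ π) (y ∘ π) := by
  ext l
  simp only [syncMeet, mem_preimage, mem_ofPred_eq, ← walkRW_perm_comp _ _ _ π]
  exact exists_congr fun k => π.surjective.injective_comp_right.eq_iff.symm

def firstAdjacent (x y : Fin d → ℕ) (t : ℕ) (u v : Fin d → ℕ) : Set (ℕ ⊕ ℕ → Fin d) :=
  {l | walkRW x inc₁ t l = u ∧ walkRW y inc₂ t l = v ∧ Adjacent u v ∧
    ∀ s < t, ¬ Adjacent (walkRW x inc₁ s l) (walkRW y inc₂ s l)}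

lemma measurableSet_firstAdjacent (t : ℕ) (u v : Fin d → ℕ) :
    MeasurableSet[past t] (firstAdjacent x y t u v) := by
  let _ : MeasurableSpace (ℕ ⊕ ℕ → Fin d) := past t
  refine (measurable_walkRW_inc₁ x t (measurableSet_singleton u)).inter <|
    (measurable_walkRW_inc₂ y t (measurableSet_singleton v)).inter <|
      (MeasurableSet.const _).inter <| Measurable.setOf <| Measurable.forall fun s => ?_
  by_cases hs : s < t
  · simp only [hs, true_imp_iff]
    exact (measurable_of_countable fun p : (Fin d → ℕ) × (Fin d → ℕ) => ¬ Adjacent p.1 p.2).comp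
      (((measurable_walkRW_inc₁ x s).mono (past_mono hs.le) le_rfl).prodMk
        ((measurable_walkRW_inc₂ y s).mono (past_mono hs.le) le_rfl))
  · simp only [hs, false_imp_iff]
    exact measurable_const

lemma pairwise_disjoint_firstAdjacent :
    Pairwise (Disjoint on fun p : ℕ × (Fin d → ℕ) × (Fin d → ℕ) =>
      firstAdjacent x y p.1 p.2.1 p.2.2) := by
  rintro ⟨t, u, v⟩ ⟨t', u', v'⟩ hne
  refine Set.disjoint_left.2 fun l ⟨hu, hv, hadj, hmin⟩ ⟨hu', hv', hadj', hmin'⟩ => hne ?_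
  obtain rfl : t = t' := by
    by_contra htt
    rcases Nat.lt_or_gt_of_ne htt with h | h
    · exact hmin' t h (hu ▸ hv ▸ hadj)
    · exact hmin t' h (hu' ▸ hv' ▸ hadj')
  simp only at hu hv hu' hv'
  rw [← hu, ← hv, ← hu', ← hv']

lemma syncMeet_subset_iUnion_firstAdjacent (hxy : x ≠ y) :
    syncMeet x y ⊆ ⋃ p : ℕ × (Fin d → ℕ) × (Fin d → ℕ),
      firstAdjacent x y p.1 p.2.1 p.2.2 ∩ shift p.1 ⁻¹' syncMeet p.2.1 p.2.2 := by
  classical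
  rintro l ⟨k, hk⟩
  obtain ⟨s, hsk, hadj⟩ := exists_adjacent_of_walkRW_eq hxy hk
  have hex : ∃ s, Adjacent (walkRW x inc₁ s l) (walkRW y inc₂ s l) := ⟨s, hadj⟩
  exact mem_iUnion.2 ⟨(Nat.find hex, _, _),
    ⟨rfl, rfl, Nat.find_spec hex, fun s hs => Nat.find_min hex hs⟩,
    shift_mem_syncMeet_iff.2 ⟨k, (Nat.find_min' hex hadj).trans hsk.le, hk⟩⟩

def firstStepEq (i j : Fin d) : Set (ℕ ⊕ ℕ → Fin d) := {l | l (.inl 0) = i ∧ l (.inr 0) = j}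

lemma measurableSet_firstStepEq (i j : Fin d) : MeasurableSet[past 1] (firstStepEq i j) :=
  (measurable_apply_past (j := .inl 0) (by simp [time]) (measurableSet_singleton i)).inter
    (measurable_apply_past (j := .inr 0) (by simp [time]) (measurableSet_singleton j))

lemma mem_meetOrigin_iff {l : ℕ ⊕ ℕ → Fin d} :
    l ∈ meetOrigin inc₁ inc₂ ↔
      shift 1 l ∈ syncMeet (Pi.single (l (.inl 0)) 1) (Pi.single (l (.inr 0)) 1) := by
  have h₁ : walkRW (fun _ => 0) inc₁ 1 l = Pi.single (l (.inl 0)) 1 := by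
    rw [walkRW_succ, walkRW_zero]
    exact zero_add _
  have h₂ : walkRW (fun _ => 0) inc₂ 1 l = Pi.single (l (.inr 0)) 1 := by
    rw [walkRW_succ, walkRW_zero]
    exact zero_add _
  rw [← h₁, ← h₂]
  exact shift_mem_syncMeet_iff.symm

lemma meetOrigin_eq_iUnion : meetOrigin (inc₁ (d := d)) inc₂ =
    ⋃ p : Fin d × Fin d,
      firstStepEq p.1 p.2 ∩ shift 1 ⁻¹' syncMeet (Pi.single p.1 1) (Pi.single p.2 1) := by
  ext l
  rw [mem_meetOrigin_iff, mem_iUnion]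
  constructor
  · exact fun h => ⟨(l (.inl 0), l (.inr 0)), ⟨rfl, rfl⟩, h⟩
  · rintro ⟨⟨i, j⟩, ⟨rfl, rfl⟩, h⟩
    exact h

lemma measurableSet_meetOrigin : MeasurableSet (meetOrigin (inc₁ (d := d)) inc₂) := by
  rw [meetOrigin_eq_iUnion]
  exact MeasurableSet.iUnion fun p => (past_le 1 _ (measurableSet_firstStepEq _ _)).inter
    (measurable_shift 1 (measurableSet_syncMeet _ _))

end PathWalk

lemma uniformOn_univ_singleton (a : Fin d) : uniformOn univ {a} = (d : ℝ≥0∞)⁻¹ := by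
  simp [uniformOn_univ]

lemma map_uniformOn_univ_perm (π : Equiv.Perm (Fin d)) :
    (uniformOn univ).map π = uniformOn (univ : Set (Fin d)) :=
  ext_of_singleton fun a => by
    have hpre : π ⁻¹' {a} = {π.symm a} := by
      ext
      simp [Equiv.eq_symm_apply]
    rw [map_apply (measurable_of_countable π) (measurableSet_singleton a), hpre,
      uniformOn_univ_singleton, uniformOn_univ_singleton]

section PathLaw

variable [NeZero d]

abbrev pathLaw (d : ℕ) [NeZero d] : Measure (ℕ ⊕ ℕ → Fin d) :=
  infinitePi fun _ => uniformOn univ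

lemma pathLaw_map_perm (π : Equiv.Perm (Fin d)) :
    (pathLaw d).map (fun l j => π (l j)) = pathLaw d := by
  rw [infinitePi_map_pi _ fun _ => measurable_of_countable π]
  simp only [map_uniformOn_univ_perm]

lemma pathLaw_syncMeet_comp_perm (π : Equiv.Perm (Fin d)) (x y : Fin d → ℕ) :
    pathLaw d (syncMeet (x ∘ π) (y ∘ π)) = pathLaw d (syncMeet x y) := by
  have hπ : Measurable fun (l : ℕ ⊕ ℕ → Fin d) j => π (l j) :=
    measurable_pi_lambda _ fun j => (measurable_of_countable π).comp (measurable_pi_apply j)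
  rw [← preimage_perm_syncMeet, ← map_apply hπ (measurableSet_syncMeet x y), pathLaw_map_perm]

lemma pathLaw_syncMeet_single_eq {i j i' j' : Fin d} (hij : i ≠ j) (hij' : i' ≠ j') :
    pathLaw d (syncMeet (Pi.single i 1) (Pi.single j 1)) =
      pathLaw d (syncMeet (Pi.single i' 1) (Pi.single j' 1)) := by
  obtain ⟨π, hi, hj⟩ := MulAction.is_two_pretransitive_iff.1
    (Equiv.Perm.isMultiplyPretransitive (Fin d) 2) hij' hij
  have hcomp (a : Fin d) : (Pi.single (π a) 1 : Fin d → ℕ) ∘ π = Pi.single a 1 := by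
    funext b
    simp [Pi.single_apply]
  rw [← pathLaw_syncMeet_comp_perm π, ← hi, ← hj, Equiv.Perm.smul_def, Equiv.Perm.smul_def,
    hcomp, hcomp]

lemma pathLaw_syncMeet_le {x y : Fin d → ℕ} (hxy : x ≠ y) {i j : Fin d} (hij : i ≠ j) :
    pathLaw d (syncMeet x y) ≤ pathLaw d (syncMeet (Pi.single i 1) (Pi.single j 1)) := by
  refine (measure_mono (syncMeet_subset_iUnion_firstAdjacent hxy)).trans <|
    measure_iUnion_inter_le (fun p => past_le _ _ (measurableSet_firstAdjacent _ _ _))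
      pairwise_disjoint_firstAdjacent fun ⟨t, u, v⟩ => ?_
  by_cases huv : Adjacent u v
  · obtain ⟨i', j', hij', h⟩ := huv
    rw [infinitePi_inter_shift_preimage _ (measurableSet_firstAdjacent _ _ _)
      (measurableSet_syncMeet u v), syncMeet_of_adjacent h,
      pathLaw_syncMeet_single_eq hij'.symm hij]
  · simp [firstAdjacent, huv]

lemma pathLaw_firstStepEq (i j : Fin d) : pathLaw d (firstStepEq i j) = (d : ℝ≥0∞)⁻¹ ^ 2 := by
  have hind := (iIndepFun_apply_infinitePi (uniformOn (univ : Set (Fin d)))).indepFun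
    (Sum.inl_ne_inr (a := 0) (b := 0))
  calc pathLaw d (firstStepEq i j)
      = pathLaw d ((fun l => l (.inl 0)) ⁻¹' {i} ∩ (fun l => l (.inr 0)) ⁻¹' {j}) := rfl
    _ = (d : ℝ≥0∞)⁻¹ ^ 2 := by
      rw [hind.measure_inter_preimage_eq_mul _ _ (measurableSet_singleton i)
        (measurableSet_singleton j),
        ← map_apply (measurable_pi_apply (Sum.inl 0)) (measurableSet_singleton i),
        ← map_apply (measurable_pi_apply (Sum.inr 0)) (measurableSet_singleton j),
        infinitePi_map_eval, infinitePi_map_eval, uniformOn_univ_singleton,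
        uniformOn_univ_singleton, sq]

lemma pathLaw_meetOrigin : pathLaw d (meetOrigin inc₁ inc₂) =
    ∑ p : Fin d × Fin d, (d : ℝ≥0∞)⁻¹ ^ 2 *
      pathLaw d (syncMeet (Pi.single p.1 1) (Pi.single p.2 1)) := by
  rw [meetOrigin_eq_iUnion, measure_iUnion ?_ fun p => ?_, tsum_fintype]
  · refine Finset.sum_congr rfl fun p _ => ?_
    rw [infinitePi_inter_shift_preimage _ (measurableSet_firstStepEq _ _)
      (measurableSet_syncMeet _ _), pathLaw_firstStepEq]
  · rintro ⟨i, j⟩ ⟨i', j'⟩ hne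
    exact Set.disjoint_left.2 fun l ⟨⟨hi, hj⟩, _⟩ ⟨⟨hi', hj'⟩, _⟩ =>
      hne (Prod.ext (hi.symm.trans hi') (hj.symm.trans hj'))
  · exact (past_le 1 _ (measurableSet_firstStepEq _ _)).inter
      (measurable_shift 1 (measurableSet_syncMeet _ _))

lemma pathLaw_meetOrigin_toReal {i j : Fin d} (hij : i ≠ j) :
    (pathLaw d (meetOrigin inc₁ inc₂)).toReal =
      1 / d + (1 - 1 / d) * (pathLaw d (syncMeet (Pi.single i 1) (Pi.single j 1))).toReal := by
  set q := (pathLaw d (syncMeet (Pi.single i 1) (Pi.single j 1))).toReal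
  have hterm (a b : Fin d) : (pathLaw d (syncMeet (Pi.single a 1) (Pi.single b 1))).toReal =
      q + if a = b then 1 - q else 0 := by
    split_ifs with hab
    · rw [hab, syncMeet_self, measure_univ, ENNReal.toReal_one]
      ring
    · rw [pathLaw_syncMeet_single_eq hab hij, add_zero]
  have hd : (d : ℝ) ≠ 0 := Nat.cast_ne_zero.2 (NeZero.ne d)
  rw [pathLaw_meetOrigin, ← Finset.mul_sum, ENNReal.toReal_mul,
    ENNReal.toReal_sum fun p _ => measure_ne_top _ _]
  simp only [ENNReal.toReal_pow, ENNReal.toReal_inv, ENNReal.toReal_natCast,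
    hterm, Fintype.sum_prod_type, Finset.sum_add_distrib, Finset.sum_const, Finset.sum_ite_eq,
    Finset.mem_univ, if_true, Finset.card_univ, Fintype.card_prod, Fintype.card_fin, nsmul_eq_mul,
    Nat.cast_mul]
  field_simp
  ring

end PathLaw

lemma le_div_of_first_step {d q c : ℝ} (hd : 1 < d)
    (h : 1 / d + (1 - 1 / d) * q ≤ 1 / d + c / d ^ 2) : q ≤ c / (d * (d - 1)) := by
  have hd₀ : 0 < d := zero_lt_one.trans hd
  rw [le_div_iff₀ (mul_pos hd₀ (sub_pos.2 hd))]
  calc q * (d * (d - 1)) = d ^ 2 * ((1 - 1 / d) * q) := by field_simp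
    _ ≤ d ^ 2 * (c / d ^ 2) := by gcongr; linarith
    _ = c := by field_simp

end OrientedWalk

namespace RWModel

open OrientedWalk Measure

variable {Ω : Type} [MeasurableSpace Ω] {P : Measure Ω} {d : ℕ} (R : RWModel P d)

def path (ω : Ω) : ℕ ⊕ ℕ → Fin d := fun j => Sum.elim R.inc1 R.inc2 j ω

lemma measurable_inc (j : ℕ ⊕ ℕ) : Measurable (Sum.elim R.inc1 R.inc2 j) := by
  cases j
  exacts [R.h1meas _, R.h2meas _]

lemma measurable_path : Measurable R.path := measurable_pi_lambda _ R.measurable_inc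

lemma map_path [NeZero d] : P.map R.path = pathLaw d := by
  refine (R.hIndep.map_fun_eq_infinitePi_map R.measurable_inc).trans ?_
  congr
  funext j
  refine ext_of_singleton fun a => ?_
  rw [map_apply (R.measurable_inc j) (measurableSet_singleton a), uniformOn_univ_singleton]
  cases j
  exacts [R.h1law _ a, R.h2law _ a]

lemma measure_path_preimage [NeZero d] {S : Set (ℕ ⊕ ℕ → Fin d)} (hS : MeasurableSet S) :
    P (R.path ⁻¹' S) = pathLaw d S := by
  rw [← map_apply R.measurable_path hS, R.map_path]

lemma measure_meetOrigin [NeZero d] :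
    P (meetOrigin R.inc1 R.inc2) = pathLaw d (meetOrigin inc₁ inc₂) :=
  R.measure_path_preimage measurableSet_meetOrigin

lemma measure_meetEvent [NeZero d] {x y : Fin d → ℕ} (h : nrm x = nrm y) :
    P (meetEvent R.inc1 R.inc2 x y) = pathLaw d (syncMeet x y) := by
  show P (R.path ⁻¹' meetEvent inc₁ inc₂ x y) = _
  rw [meetEvent_eq_syncMeet h, R.measure_path_preimage (measurableSet_syncMeet x y)]

end RWModel

theorem meet_prob_same_level_general (Ω : ℕ → Type) (mΩ : ∀ d, MeasurableSpace (Ω d))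
    (P : ∀ d, @Measure (Ω d) (mΩ d))
    (RW : ∀ d, RWModel (P d) d)
    (c₃ : ℝ)
    (hyp : ∀ d : ℕ, 4 ≤ d →
      ((P d) (meetOrigin (RW d).inc1 (RW d).inc2)).toReal ≤ 1 / d + c₃ / (d : ℝ) ^ 2) :
    ∀ d : ℕ, 4 ≤ d → ∀ x y : Fin d → ℕ, x ≠ y → nrm x = nrm y →
      ((P d) (meetEvent (RW d).inc1 (RW d).inc2 x y)).toReal ≤
        c₃ / ((d : ℝ) * ((d : ℝ) - 1)) := by
  intro d hd x y hxy hnrm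
  have : NeZero d := ⟨by omega⟩
  have h01 : (⟨0, by omega⟩ : Fin d) ≠ ⟨1, by omega⟩ := by simp
  have horigin := hyp d hd
  rw [(RW d).measure_meetOrigin, OrientedWalk.pathLaw_meetOrigin_toReal h01] at horigin
  rw [(RW d).measure_meetEvent hnrm]
  exact (ENNReal.toReal_mono (measure_ne_top _ _) (OrientedWalk.pathLaw_syncMeet_le hxy h01)).trans
    (OrientedWalk.le_div_of_first_step (by exact_mod_cast (by omega : 1 < d)) horigin)

/-- Assume there is a constant `c₃ > 0` such that
`ℙ_d(τ_{O,O} < ∞) ≤ 1/d + c₃/d²` for every `d ≥ 4`.  Then for every `d ≥ 4` and all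
`x, y ∈ ℤ₊^d` with `x ≠ y` and `‖x‖ = ‖y‖`, `ℙ_d(τ_{x,y} < ∞) ≤ c₃/(d(d − 1))`. -/
theorem meet_prob_same_level (Ω : ℕ → Type) (mΩ : ∀ d, MeasurableSpace (Ω d))
    (P : ∀ d, @Measure (Ω d) (mΩ d))
    (RW : ∀ d, RWModel (P d) d)
    (c₃ : ℝ) (hc₃ : 0 < c₃)
    (hyp : ∀ d : ℕ, 4 ≤ d →
      ((P d) (meetOrigin (RW d).inc1 (RW d).inc2)).toReal ≤ 1 / d + c₃ / (d : ℝ) ^ 2) :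
    ∀ d : ℕ, 4 ≤ d → ∀ x y : Fin d → ℕ, x ≠ y → nrm x = nrm y →
      ((P d) (meetEvent (RW d).inc1 (RW d).inc2 x y)).toReal ≤
        c₃ / ((d : ℝ) * ((d : ℝ) - 1)) :=
  meet_prob_same_level_general Ω mΩ P RW c₃ hyp
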